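/- There exists R₀ > 0 (depending only on c and N) such that if R ≥ R₀, then for every integer k ≥ 1, every z ∈ B_k, and every integer n ≥ 0, the n-th iterate satisfies f^n(z) ∈ B_{k+n}; in particular |f^n(z)| ≥ 4R_{k+n} for all n, so the iterates f^n tend to infinity uniformly on B_k. -/

import Mathlib

open Complex

noncomputable section

/-- `f₀(z) = z² + c` iterated `N` times. -/
def f0iter (c : ℂ) (N : ℕ) (z : ℂ) : ℂ := (fun w => w ^ 2 + c)^[N] z

/-- `n_k = 2^(N + k - 1)`. -/
def nseq (N k : ℕ) : ℕ := 2 ^ (N + k - 1)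

/-- The radii `R_k`: `R₁ = 2R`, `R_{k+1} = max {|f_k(z)| : |z| = 2 R_k}` where
`f_k(z) = f₀^N(z) · ∏_{j=1}^k (1 - (1/2)(z/R_j)^{n_j})`. -/
def Rseq (c : ℂ) (N : ℕ) (R : ℝ) : ℕ → ℝ
  | 0 => R
  | 1 => 2 * R
  | k + 2 =>
      sSup ((fun z => ‖(f0iter c N z *
        ∏ j ∈ (Finset.Icc 1 (k + 1)).attach,
          (1 - (1 / 2) * (z / ((Rseq c N R j.1 : ℝ) : ℂ)) ^ nseq N j.1))‖) ''
        Metric.sphere (0 : ℂ) (2 * Rseq c N R (k + 1)))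
  decreasing_by
  · have := j.2; simp only [Finset.mem_Icc] at this; omega
  · omega

/-- `F_k(z) = 1 - (1/2)(z/R_k)^{n_k}`. -/
def Fseq (c : ℂ) (N : ℕ) (R : ℝ) (k : ℕ) (z : ℂ) : ℂ :=
  1 - (1 / 2) * (z / ((Rseq c N R k : ℝ) : ℂ)) ^ nseq N k

/-- The partial product `f_k(z) = f₀^N(z) · ∏_{j=1}^k F_j(z)`. -/
def fseq (c : ℂ) (N : ℕ) (R : ℝ) (k : ℕ) (z : ℂ) : ℂ :=
  f0iter c N z * ∏ j ∈ Finset.Icc 1 k, Fseq c N R j z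

/-- The infinite product `f(z) = f₀^N(z) · ∏_{k=1}^∞ F_k(z)`. -/
def flim (c : ℂ) (N : ℕ) (R : ℝ) (z : ℂ) : ℂ :=
  f0iter c N z * ∏' k : ℕ, Fseq c N R (k + 1) z

/-- The standing assumption `1/2 ≤ |f₀^N(z)|/|z|^{2^N} ≤ 2` for `|z| ≥ R`. -/
def OneBound (c : ℂ) (N : ℕ) (R : ℝ) : Prop :=
  ∀ z : ℂ, R ≤ ‖z‖ →
    1 / 2 ≤ ‖f0iter c N z‖ / ‖z‖ ^ 2 ^ N ∧
    ‖f0iter c N z‖ / ‖z‖ ^ 2 ^ N ≤ 2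

/-- `C₁ = R₁^{n₁}/2`, and for `k ≥ 2`,
`C_k = (-1)^{k-1} 2^{-k} R_k^{n_k} ∏_{j=1}^{k-1} R_j^{-n_j}`. -/
def Cseq (c : ℂ) (N : ℕ) (R : ℝ) (k : ℕ) : ℝ :=
  (-1) ^ (k - 1) * Rseq c N R k ^ nseq N k /
    (2 ^ k * ∏ j ∈ Finset.Icc 1 (k - 1), Rseq c N R j ^ nseq N j)

/-- The annulus `B_k = {z : 4R_k ≤ |z| ≤ R_{k+1}/4}`. -/
def Bset (c : ℂ) (N : ℕ) (R : ℝ) (k : ℕ) : Set ℂ :=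
  {z | 4 * Rseq c N R k ≤ ‖z‖ ∧ ‖z‖ ≤ Rseq c N R (k + 1) / 4}

open Finset Filter

/-!
On `B_k` the factors `F_j` with `j ≤ k` are dominated by their monomial terms, while those with
`j > k` are so close to `1` that their product lies in `[1/2, 2]`. Hence `|f(z)|` lies between
`M_k(|z|) / (4 · 4^k)` and `4 M_k(|z|)`, where `M_k(r) = r^{d_k} / ∏_{j ≤ k} R_j^{n_j}`
(`fseqModel`) and `d_k` is the degree of `f_k`. The same comparison for `f_k` on `|z| = 2 R_k`
locates `R_{k+1}` within the factors `2 · 4^k` of `M_k(2 R_k)` and gives `R_{k+1} ≥ 16 R_k`.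
Since `M_k` scales like `r^{d_k}` and `2^{d_k}` beats `32 · 4^k`, comparing `M_k(|z|)` with
`M_k(2 R_k)` and with `M_{k+1}(2 R_{k+1})` yields `4 R_{k+1} ≤ |f(z)| ≤ R_{k+2} / 4`. So `f` maps
`B_k` into `B_{k+1}`, and the geometric growth of the radii makes the iterates escape uniformly.
-/

lemma norm_tprod_one_add_sub_one_le {ι R : Type*} [NormedCommRing R] [NormOneClass R]
    [CompleteSpace R] {f : ι → R} (hf : Summable fun i ↦ ‖f i‖) :
    ‖∏' i, (1 + f i) - 1‖ ≤ Real.exp (∑' i, ‖f i‖) - 1 := by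
  have hprod := (multipliable_one_add_of_summable hf).hasProd
  refine le_of_tendsto' ((hprod.sub_const 1).norm) fun s ↦ ?_
  refine (s.norm_prod_one_add_sub_one_le f).trans ?_
  gcongr
  exact hf.sum_le_tsum s fun i _ ↦ norm_nonneg _

lemma norm_one_sub_half_mul_mem_Icc {w : ℂ} (hw : 4 ≤ ‖w‖) :
    ‖1 - 1 / 2 * w‖ ∈ Set.Icc (‖w‖ / 4) ‖w‖ := by
  have hhalf : ‖1 / 2 * w‖ = ‖w‖ / 2 := by simp [div_eq_inv_mul]
  constructor
  · have := norm_sub_norm_le (1 / 2 * w) 1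
    rw [norm_sub_rev, hhalf, norm_one] at this
    linarith
  · have := norm_sub_le (1 : ℂ) (1 / 2 * w)
    rw [hhalf, norm_one] at this
    linarith

lemma norm_div_ofReal_pow {z : ℂ} {r : ℝ} (hr : 0 ≤ r) (n : ℕ) :
    ‖(z / (r : ℂ)) ^ n‖ = (‖z‖ / r) ^ n := by
  rw [norm_pow, norm_div, Complex.norm_real, Real.norm_of_nonneg hr]

def fseqDegree (N k : ℕ) : ℕ := 2 ^ N + ∑ j ∈ Icc 1 k, nseq N j

def radiiProd (c : ℂ) (N : ℕ) (R : ℝ) (k : ℕ) : ℝ := ∏ j ∈ Icc 1 k, Rseq c N R j ^ nseq N j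

def fseqModel (c : ℂ) (N : ℕ) (R : ℝ) (k : ℕ) (r : ℝ) : ℝ :=
  r ^ fseqDegree N k / radiiProd c N R k

lemma two_le_nseq {N : ℕ} (hN : 2 ≤ N) (j : ℕ) : 2 ≤ nseq N j :=
  Nat.pow_le_pow_right (n := 2) (i := 1) two_pos (by omega)

lemma thirtyTwo_mul_four_pow_le_two_pow_fseqDegree {N : ℕ} (hN : 3 ≤ N) (k : ℕ) :
    32 * 4 ^ k ≤ (2 : ℝ) ^ fseqDegree N k := by
  have hsum : 2 * k ≤ ∑ j ∈ Icc 1 k, nseq N j := by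
    simpa [mul_comm] using Finset.card_nsmul_le_sum (Icc 1 k) (nseq N) 2
      fun _ _ ↦ two_le_nseq (by omega) _
  have hN8 : 8 ≤ 2 ^ N := by
    calc 8 = 2 ^ 3 := rfl
      _ ≤ 2 ^ N := Nat.pow_le_pow_right two_pos hN
  calc (32 : ℝ) * 4 ^ k = 2 ^ (2 * k + 5) := by rw [pow_add, pow_mul]; norm_num; ring
    _ ≤ 2 ^ fseqDegree N k := pow_le_pow_right₀ one_le_two (by unfold fseqDegree; omega)

section

variable {c : ℂ} {N : ℕ} {R : ℝ} {k : ℕ}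

lemma norm_Fseq_mem_Icc {j : ℕ} {z : ℂ} (hN : 2 ≤ N) (hRj : 0 < Rseq c N R j)
    (hz : 2 * Rseq c N R j ≤ ‖z‖) :
    ‖Fseq c N R j z‖ ∈ Set.Icc ((‖z‖ / Rseq c N R j) ^ nseq N j / 4)
      ((‖z‖ / Rseq c N R j) ^ nseq N j) := by
  rw [Fseq, ← norm_div_ofReal_pow hRj.le]
  refine norm_one_sub_half_mul_mem_Icc ?_
  rw [norm_div_ofReal_pow hRj.le]
  calc (4 : ℝ) = 2 ^ 2 := by norm_num
    _ ≤ 2 ^ nseq N j := pow_le_pow_right₀ one_le_two (two_le_nseq hN j)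
    _ ≤ _ := by gcongr; exact (le_div_iff₀ hRj).mpr (by linarith)

lemma norm_Fseq_sub_one {j : ℕ} (hRj : 0 ≤ Rseq c N R j) (z : ℂ) :
    ‖Fseq c N R j z - 1‖ = (‖z‖ / Rseq c N R j) ^ nseq N j / 2 := by
  rw [Fseq, sub_sub_cancel_left, norm_neg, norm_mul, norm_div_ofReal_pow hRj]
  norm_num
  ring

lemma Rseq_one : Rseq c N R 1 = 2 * R := by rw [Rseq]

lemma Rseq_succ_eq_sSup (hk : 1 ≤ k) :
    Rseq c N R (k + 1) =
      sSup ((fun z ↦ ‖fseq c N R k z‖) '' Metric.sphere 0 (2 * Rseq c N R k)) := by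
  obtain ⟨m, rfl⟩ : ∃ m, k = m + 1 := ⟨k - 1, by omega⟩
  -- the recursive equation of `Rseq` ranges over `(Icc 1 (m + 1)).attach`, for termination
  rw [Rseq]
  unfold fseq Fseq
  congr! 5 with z
  exact prod_attach _ fun j ↦ 1 - 1 / 2 * (z / ((Rseq c N R j : ℝ) : ℂ)) ^ nseq N j

lemma continuous_fseq : Continuous (fseq c N R k) := by
  unfold fseq f0iter Fseq
  fun_prop

lemma norm_fseq_le_Rseq_succ (hk : 1 ≤ k) {z : ℂ} (hz : ‖z‖ = 2 * Rseq c N R k) :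
    ‖fseq c N R k z‖ ≤ Rseq c N R (k + 1) := by
  rw [Rseq_succ_eq_sSup hk]
  refine le_csSup ((isCompact_sphere 0 _).image continuous_fseq.norm).bddAbove ?_
  exact ⟨z, by simpa using hz, rfl⟩

lemma Rseq_succ_le (hk : 1 ≤ k) (hRk : 0 ≤ Rseq c N R k) {M : ℝ}
    (hM : ∀ z : ℂ, ‖z‖ = 2 * Rseq c N R k → ‖fseq c N R k z‖ ≤ M) :
    Rseq c N R (k + 1) ≤ M := by
  rw [Rseq_succ_eq_sSup hk]
  refine csSup_le ((NormedSpace.sphere_nonempty.mpr (by positivity)).image _) ?_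
  rintro _ ⟨z, hz, rfl⟩
  exact hM z (by simpa using hz)

lemma fseqModel_eq_mul_prod (r : ℝ) :
    fseqModel c N R k r = r ^ 2 ^ N * ∏ j ∈ Icc 1 k, (r / Rseq c N R j) ^ nseq N j := by
  simp only [fseqModel, fseqDegree, radiiProd, div_pow, prod_div_distrib, prod_pow_eq_pow_sum,
    pow_add]
  ring

lemma norm_fseq_mem_Icc (hN : 2 ≤ N) (hR : 0 < R) (hOB : OneBound c N R) {z : ℂ}
    (hzR : R ≤ ‖z‖) (hRz : ∀ j ∈ Icc 1 k, 0 < Rseq c N R j ∧ 2 * Rseq c N R j ≤ ‖z‖) :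
    ‖fseq c N R k z‖ ∈
      Set.Icc (fseqModel c N R k ‖z‖ / (2 * 4 ^ k)) (2 * fseqModel c N R k ‖z‖) := by
  obtain ⟨hf0_lo, hf0_hi⟩ := hOB z hzR
  have hzpow : 0 < ‖z‖ ^ 2 ^ N := pow_pos (hR.trans_le hzR) _
  rw [le_div_iff₀ hzpow] at hf0_lo
  rw [div_le_iff₀ hzpow] at hf0_hi
  have hF j (hj : j ∈ Icc 1 k) := norm_Fseq_mem_Icc hN (hRz j hj).1 (hRz j hj).2
  set q : ℕ → ℝ := fun j ↦ (‖z‖ / Rseq c N R j) ^ nseq N j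
  have hq4 : ∏ j ∈ Icc 1 k, q j / 4 = (∏ j ∈ Icc 1 k, q j) / 4 ^ k := by
    rw [prod_div_distrib, prod_const, Nat.card_Icc, Nat.add_sub_cancel]
  have hq0 : ∀ j ∈ Icc 1 k, 0 ≤ q j / 4 := fun j hj ↦ by
    have := (hRz j hj).1.le
    positivity
  rw [fseq, norm_mul, norm_prod, fseqModel_eq_mul_prod]
  constructor
  · calc (‖z‖ ^ 2 ^ N * ∏ j ∈ Icc 1 k, q j) / (2 * 4 ^ k)
        = ‖z‖ ^ 2 ^ N / 2 * ∏ j ∈ Icc 1 k, q j / 4 := by rw [hq4]; ring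
      _ ≤ ‖f0iter c N z‖ * ∏ j ∈ Icc 1 k, ‖Fseq c N R j z‖ :=
          mul_le_mul (by linarith) (prod_le_prod hq0 fun j hj ↦ (hF j hj).1)
            (prod_nonneg hq0) (norm_nonneg _)
  · calc ‖f0iter c N z‖ * ∏ j ∈ Icc 1 k, ‖Fseq c N R j z‖
        ≤ 2 * ‖z‖ ^ 2 ^ N * ∏ j ∈ Icc 1 k, q j := by
          gcongr with j hj
          exact (hF j hj).2
      _ = 2 * (‖z‖ ^ 2 ^ N * ∏ j ∈ Icc 1 k, q j) := by ring

lemma fseqModel_mul (a r : ℝ) :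
    fseqModel c N R k (a * r) = a ^ fseqDegree N k * fseqModel c N R k r := by
  rw [fseqModel, fseqModel, mul_pow, mul_div_assoc]

lemma fseqModel_succ_Rseq_succ (h : Rseq c N R (k + 1) ≠ 0) :
    fseqModel c N R (k + 1) (Rseq c N R (k + 1)) = fseqModel c N R k (Rseq c N R (k + 1)) := by
  rw [fseqModel, fseqModel, fseqDegree, fseqDegree, radiiProd, radiiProd,
    sum_Icc_succ_top (by omega), prod_Icc_succ_top (by omega), ← add_assoc, pow_add]
  field_simp

lemma radiiProd_pos (hpos : ∀ j ∈ Icc 1 k, 0 < Rseq c N R j) : 0 < radiiProd c N R k :=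
  prod_pos fun j hj ↦ pow_pos (hpos j hj) _

lemma fseqModel_nonneg (hP : 0 ≤ radiiProd c N R k) {r : ℝ} (hr : 0 ≤ r) :
    0 ≤ fseqModel c N R k r := by
  unfold fseqModel; positivity

lemma fseqModel_le_fseqModel (hP : 0 ≤ radiiProd c N R k) {r s : ℝ} (hr : 0 ≤ r)
    (hrs : r ≤ s) : fseqModel c N R k r ≤ fseqModel c N R k s := by
  unfold fseqModel; gcongr

lemma two_mul_le_Rseq_of_monotoneOn (hmono : MonotoneOn (Rseq c N R) (Set.Icc 1 k)) {j : ℕ}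
    (hj : j ∈ Set.Icc 1 k) : 2 * R ≤ Rseq c N R j := by
  rw [← Rseq_one]
  exact hmono ⟨le_rfl, hj.1.trans hj.2⟩ hj hj.1

lemma norm_fseq_mem_Icc_of_monotoneOn (hN : 2 ≤ N) (hR : 0 < R) (hOB : OneBound c N R)
    (hk : 1 ≤ k) (hmono : MonotoneOn (Rseq c N R) (Set.Icc 1 k)) {z : ℂ}
    (hz : 2 * Rseq c N R k ≤ ‖z‖) :
    ‖fseq c N R k z‖ ∈
      Set.Icc (fseqModel c N R k ‖z‖ / (2 * 4 ^ k)) (2 * fseqModel c N R k ‖z‖) := by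
  have hRk := two_mul_le_Rseq_of_monotoneOn hmono ⟨hk, le_rfl⟩
  refine norm_fseq_mem_Icc hN hR hOB (by linarith) fun j hj ↦ ?_
  have hj' : j ∈ Set.Icc 1 k := mem_Icc.mp hj
  have hRj := two_mul_le_Rseq_of_monotoneOn hmono hj'
  have := hmono hj' ⟨hk, le_rfl⟩ hj'.2
  constructor <;> linarith

lemma fseqModel_div_le_Rseq_succ (hN : 2 ≤ N) (hR : 0 < R) (hOB : OneBound c N R) (hk : 1 ≤ k)
    (hmono : MonotoneOn (Rseq c N R) (Set.Icc 1 k)) :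
    fseqModel c N R k (2 * Rseq c N R k) / (2 * 4 ^ k) ≤ Rseq c N R (k + 1) := by
  have hRk := two_mul_le_Rseq_of_monotoneOn hmono ⟨hk, le_rfl⟩
  obtain ⟨z, hz⟩ : ∃ z : ℂ, ‖z‖ = 2 * Rseq c N R k :=
    ⟨(2 * Rseq c N R k : ℝ), by rw [Complex.norm_real, Real.norm_of_nonneg (by linarith)]⟩
  have hfz := (norm_fseq_mem_Icc_of_monotoneOn hN hR hOB hk hmono hz.ge).1
  rw [hz] at hfz
  exact hfz.trans (norm_fseq_le_Rseq_succ hk hz)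

lemma Rseq_succ_le_two_mul_fseqModel (hN : 2 ≤ N) (hR : 0 < R) (hOB : OneBound c N R)
    (hk : 1 ≤ k) (hmono : MonotoneOn (Rseq c N R) (Set.Icc 1 k)) :
    Rseq c N R (k + 1) ≤ 2 * fseqModel c N R k (2 * Rseq c N R k) := by
  have hRk := two_mul_le_Rseq_of_monotoneOn hmono ⟨hk, le_rfl⟩
  refine Rseq_succ_le hk (by linarith) fun z hz ↦ ?_
  rw [← hz]
  exact (norm_fseq_mem_Icc_of_monotoneOn hN hR hOB hk hmono hz.ge).2

lemma radiiProd_pos_of_monotoneOn (hR : 0 < R) (hmono : MonotoneOn (Rseq c N R) (Set.Icc 1 k)) :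
    0 < radiiProd c N R k :=
  radiiProd_pos fun j hj ↦ by
    linarith [two_mul_le_Rseq_of_monotoneOn hmono (mem_Icc.mp hj : j ∈ Set.Icc 1 k)]

lemma Rseq_le_fseqModel_Rseq (hR : 1 ≤ R) (hk : 1 ≤ k)
    (hmono : MonotoneOn (Rseq c N R) (Set.Icc 1 k)) :
    Rseq c N R k ≤ fseqModel c N R k (Rseq c N R k) := by
  have hRk := two_mul_le_Rseq_of_monotoneOn hmono ⟨hk, le_rfl⟩
  have hP := radiiProd_pos_of_monotoneOn (by linarith) hmono
  have hP_le : radiiProd c N R k ≤ Rseq c N R k ^ ∑ j ∈ Icc 1 k, nseq N j := by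
    rw [radiiProd, ← prod_pow_eq_pow_sum]
    refine prod_le_prod (fun j hj ↦ ?_) fun j hj ↦ ?_ <;>
      have hj' : j ∈ Set.Icc 1 k := mem_Icc.mp hj <;>
      have := two_mul_le_Rseq_of_monotoneOn hmono hj'
    · exact pow_nonneg (by linarith) _
    · exact pow_le_pow_left₀ (by linarith) (hmono hj' ⟨hk, le_rfl⟩ hj'.2) _
  rw [fseqModel, fseqDegree, pow_add, mul_div_assoc]
  calc Rseq c N R k ≤ Rseq c N R k ^ 2 ^ N := le_self_pow₀ (by linarith) (by positivity)
    _ ≤ _ := le_mul_of_one_le_right (pow_nonneg (by linarith) _) ((one_le_div hP).mpr hP_le)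

lemma sixteen_mul_Rseq_le_Rseq_succ_of_monotoneOn (hN : 3 ≤ N) (hR : 1 ≤ R)
    (hOB : OneBound c N R) (hk : 1 ≤ k) (hmono : MonotoneOn (Rseq c N R) (Set.Icc 1 k)) :
    16 * Rseq c N R k ≤ Rseq c N R (k + 1) := by
  have hRk := two_mul_le_Rseq_of_monotoneOn hmono ⟨hk, le_rfl⟩
  calc 16 * Rseq c N R k = 32 * 4 ^ k * Rseq c N R k / (2 * 4 ^ k) := by field_simp; ring
    _ ≤ 2 ^ fseqDegree N k * fseqModel c N R k (Rseq c N R k) / (2 * 4 ^ k) := by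
        gcongr
        · linarith
        · exact thirtyTwo_mul_four_pow_le_two_pow_fseqDegree hN k
        · exact Rseq_le_fseqModel_Rseq hR hk hmono
    _ = fseqModel c N R k (2 * Rseq c N R k) / (2 * 4 ^ k) := by rw [fseqModel_mul]
    _ ≤ Rseq c N R (k + 1) :=
        fseqModel_div_le_Rseq_succ (by omega) (by linarith) hOB hk hmono

lemma monotoneOn_Rseq (hN : 3 ≤ N) (hR : 1 ≤ R) (hOB : OneBound c N R) (m : ℕ) :
    MonotoneOn (Rseq c N R) (Set.Icc 1 m) := by
  induction m with
  | zero => simp [MonotoneOn]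
  | succ m ih =>
    refine monotoneOn_of_le_succ Set.ordConnected_Icc fun a _ ha hsa ↦ ?_
    rw [Order.succ_eq_add_one] at hsa ⊢
    rcases Nat.lt_or_ge a m with hak | hak
    · exact ih ⟨ha.1, hak.le⟩ ⟨by omega, hak⟩ (by omega)
    · obtain rfl : a = m := by linarith [hsa.2]
      have h16 := sixteen_mul_Rseq_le_Rseq_succ_of_monotoneOn hN hR hOB ha.1 ih
      linarith [two_mul_le_Rseq_of_monotoneOn ih ⟨ha.1, le_rfl⟩]

lemma two_mul_le_Rseq (hN : 3 ≤ N) (hR : 1 ≤ R) (hOB : OneBound c N R) (hk : 1 ≤ k) :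
    2 * R ≤ Rseq c N R k :=
  two_mul_le_Rseq_of_monotoneOn (monotoneOn_Rseq hN hR hOB k) ⟨hk, le_rfl⟩

lemma norm_Fseq_tail_sub_one_le (hN : 3 ≤ N) (hR : 1 ≤ R) (hOB : OneBound c N R) {z : ℂ}
    (hz : ‖z‖ ≤ Rseq c N R (k + 1) / 4) (i : ℕ) :
    ‖Fseq c N R (i + k + 1) z - 1‖ ≤ (1 / 2 : ℝ) ^ i / 8 := by
  have hRj := two_mul_le_Rseq hN hR hOB (by omega : 1 ≤ i + k + 1)
  have hle := monotoneOn_Rseq hN hR hOB (i + k + 1) ⟨by omega, by omega⟩ ⟨by omega, le_rfl⟩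
    (by omega : k + 1 ≤ i + k + 1)
  have hratio : ‖z‖ / Rseq c N R (i + k + 1) ≤ 1 / 4 := by
    rw [div_le_iff₀ (by linarith)]
    linarith
  have hn : i + 1 ≤ nseq N (i + k + 1) :=
    (show i + 1 ≤ N + (i + k + 1) - 1 by omega).trans Nat.lt_two_pow_self.le
  rw [norm_Fseq_sub_one (by linarith)]
  calc (‖z‖ / Rseq c N R (i + k + 1)) ^ nseq N (i + k + 1) / 2
      ≤ (1 / 4 : ℝ) ^ (i + 1) / 2 := by
        gcongr
        exact (pow_le_pow_left₀ (div_nonneg (norm_nonneg _) (by linarith)) hratio _).trans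
          (pow_le_pow_of_le_one (by norm_num) (by norm_num) hn)
    _ = (1 / 4 : ℝ) ^ i / 8 := by ring
    _ ≤ (1 / 2 : ℝ) ^ i / 8 := by gcongr; norm_num

lemma flim_eq_fseq_mul_tprod {z : ℂ} (hmult : Multipliable fun i ↦ Fseq c N R (i + k + 1) z) :
    flim c N R z = fseq c N R k z * ∏' i, Fseq c N R (i + k + 1) z := by
  have hsplit := hmult.prod_mul_tprod_nat_mul' (f := fun i ↦ Fseq c N R (i + 1) z)
  rw [flim, fseq, ← hsplit, range_eq_Ico, prod_Ico_add' (fun j ↦ Fseq c N R j z),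
    zero_add, Ico_add_one_right_eq_Icc, mul_assoc]

lemma norm_flim_mem_Icc (hN : 3 ≤ N) (hR : 1 ≤ R) (hOB : OneBound c N R) {z : ℂ}
    (hz : ‖z‖ ≤ Rseq c N R (k + 1) / 4) :
    ‖flim c N R z‖ ∈ Set.Icc (‖fseq c N R k z‖ / 2) (2 * ‖fseq c N R k z‖) := by
  set a : ℕ → ℂ := fun i ↦ Fseq c N R (i + k + 1) z - 1
  have ha := norm_Fseq_tail_sub_one_le hN hR hOB hz
  have hgeom : Summable fun i : ℕ ↦ (1 / 2 : ℝ) ^ i / 8 := summable_geometric_two.div_const 8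
  have hsum : Summable fun i ↦ ‖a i‖ := hgeom.of_nonneg_of_le (fun _ ↦ norm_nonneg _) ha
  have hT : ‖∏' i, (1 + a i) - 1‖ ≤ 1 / 2 := by
    have htsum : ∑' i, ‖a i‖ ≤ 1 / 4 := by
      calc ∑' i, ‖a i‖ ≤ ∑' i : ℕ, (1 / 2 : ℝ) ^ i / 8 := hsum.tsum_le_tsum ha hgeom
        _ = 1 / 4 := by rw [tsum_div_const, tsum_geometric_two]; norm_num
    calc ‖∏' i, (1 + a i) - 1‖ ≤ Real.exp (∑' i, ‖a i‖) - 1 := norm_tprod_one_add_sub_one_le hsum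
      _ ≤ 1 / (1 - 1 / 4) - 1 := by
          gcongr
          exact (Real.exp_le_exp.mpr htsum).trans
            (Real.exp_bound_div_one_sub_of_interval (by norm_num) (by norm_num))
      _ ≤ 1 / 2 := by norm_num
  simp only [a, add_sub_cancel] at hsum hT
  have hT' := (abs_le.mp ((abs_norm_sub_norm_le _ 1).trans hT))
  rw [norm_one] at hT'
  rw [flim_eq_fseq_mul_tprod (by simpa using multipliable_one_add_of_summable hsum), norm_mul]
  have := norm_nonneg (fseq c N R k z)
  constructor <;> nlinarith

lemma four_mul_Rseq_succ_le_norm_flim (hN : 3 ≤ N) (hR : 1 ≤ R) (hOB : OneBound c N R)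
    (hk : 1 ≤ k) {z : ℂ} (hz : z ∈ Bset c N R k) :
    4 * Rseq c N R (k + 1) ≤ ‖flim c N R z‖ := by
  have hmono := monotoneOn_Rseq hN hR hOB k
  have hRk := two_mul_le_Rseq hN hR hOB hk
  have hP := (radiiProd_pos_of_monotoneOn (by linarith) hmono).le
  have hM := fseqModel_nonneg hP (by linarith : 0 ≤ 2 * Rseq c N R k)
  calc 4 * Rseq c N R (k + 1)
      ≤ 4 * (2 * fseqModel c N R k (2 * Rseq c N R k)) := by
        gcongr; exact Rseq_succ_le_two_mul_fseqModel (by omega) (by linarith) hOB hk hmono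
    _ = 32 * 4 ^ k * fseqModel c N R k (2 * Rseq c N R k) / (4 * 4 ^ k) := by
        field_simp; ring
    _ ≤ 2 ^ fseqDegree N k * fseqModel c N R k (2 * Rseq c N R k) / (4 * 4 ^ k) := by
        gcongr; exact thirtyTwo_mul_four_pow_le_two_pow_fseqDegree hN k
    _ = fseqModel c N R k (2 * (2 * Rseq c N R k)) / (4 * 4 ^ k) := by
        rw [fseqModel_mul 2 (2 * Rseq c N R k)]
    _ ≤ fseqModel c N R k ‖z‖ / (4 * 4 ^ k) := by
        gcongr; exact fseqModel_le_fseqModel hP (by linarith) (by linarith [hz.1])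
    _ = fseqModel c N R k ‖z‖ / (2 * 4 ^ k) / 2 := by ring
    _ ≤ ‖fseq c N R k z‖ / 2 := by
        gcongr
        exact (norm_fseq_mem_Icc_of_monotoneOn (by omega) (by linarith) hOB hk hmono
          (by linarith [hz.1])).1
    _ ≤ ‖flim c N R z‖ := (norm_flim_mem_Icc hN hR hOB hz.2).1

lemma norm_flim_le_Rseq_succ_succ_div_four (hN : 3 ≤ N) (hR : 1 ≤ R) (hOB : OneBound c N R)
    (hk : 1 ≤ k) {z : ℂ} (hz : z ∈ Bset c N R k) :
    ‖flim c N R z‖ ≤ Rseq c N R (k + 1 + 1) / 4 := by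
  have hmono := monotoneOn_Rseq hN hR hOB k
  have hRk := two_mul_le_Rseq hN hR hOB hk
  have hRk1 := two_mul_le_Rseq hN hR hOB (by omega : 1 ≤ k + 1)
  have hP := (radiiProd_pos_of_monotoneOn (by linarith) hmono).le
  set M := fseqModel c N R (k + 1) (Rseq c N R (k + 1))
  have hM : fseqModel c N R k (Rseq c N R (k + 1)) = M :=
    (fseqModel_succ_Rseq_succ (by linarith)).symm
  have hM0 : 0 ≤ M := hM ▸ fseqModel_nonneg hP (by linarith)
  calc ‖flim c N R z‖ ≤ 2 * ‖fseq c N R k z‖ := (norm_flim_mem_Icc hN hR hOB hz.2).2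
    _ ≤ 2 * (2 * fseqModel c N R k ‖z‖) := by
        gcongr
        exact (norm_fseq_mem_Icc_of_monotoneOn (by omega) (by linarith) hOB hk hmono
          (by linarith [hz.1])).2
    _ ≤ 2 * (2 * M) := by
        rw [← hM]
        gcongr
        exact fseqModel_le_fseqModel hP (norm_nonneg _) (by linarith [hz.2])
    _ = 32 * 4 ^ (k + 1) * M / (2 * 4 ^ (k + 1)) / 4 := by field_simp; ring
    _ ≤ 2 ^ fseqDegree N (k + 1) * M / (2 * 4 ^ (k + 1)) / 4 := by
        gcongr; exact thirtyTwo_mul_four_pow_le_two_pow_fseqDegree hN (k + 1)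
    _ = fseqModel c N R (k + 1) (2 * Rseq c N R (k + 1)) / (2 * 4 ^ (k + 1)) / 4 := by
        rw [fseqModel_mul]
    _ ≤ Rseq c N R (k + 1 + 1) / 4 := by
        gcongr
        exact fseqModel_div_le_Rseq_succ (by omega) (by linarith) hOB (by omega)
          (monotoneOn_Rseq hN hR hOB (k + 1))

lemma mapsTo_flim_Bset (hN : 3 ≤ N) (hR : 1 ≤ R) (hOB : OneBound c N R) (hk : 1 ≤ k) :
    Set.MapsTo (flim c N R) (Bset c N R k) (Bset c N R (k + 1)) := fun _ hz ↦
  ⟨four_mul_Rseq_succ_le_norm_flim hN hR hOB hk hz,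
    norm_flim_le_Rseq_succ_succ_div_four hN hR hOB hk hz⟩

lemma mapsTo_iterate_flim_Bset (hN : 3 ≤ N) (hR : 1 ≤ R) (hOB : OneBound c N R) (hk : 1 ≤ k)
    (n : ℕ) : Set.MapsTo (flim c N R)^[n] (Bset c N R k) (Bset c N R (k + n)) := by
  induction n with
  | zero => exact Set.mapsTo_id _
  | succ n ih =>
    rw [Function.iterate_succ']
    exact (mapsTo_flim_Bset (k := k + n) hN hR hOB (by omega)).comp ih

lemma sixteen_pow_mul_Rseq_le (hN : 3 ≤ N) (hR : 1 ≤ R) (hOB : OneBound c N R) (hk : 1 ≤ k)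
    (n : ℕ) : 16 ^ n * Rseq c N R k ≤ Rseq c N R (k + n) := by
  induction n with
  | zero => simp
  | succ n ih =>
    have h16 := sixteen_mul_Rseq_le_Rseq_succ_of_monotoneOn hN hR hOB (by omega : 1 ≤ k + n)
      (monotoneOn_Rseq hN hR hOB (k + n))
    rw [pow_succ, mul_comm _ (16 : ℝ), mul_assoc, ← add_assoc]
    nlinarith

end

/-- There is `R₀ > 0` (depending only on `c`, `N`) such that for `R ≥ R₀`, every
`k ≥ 1`, every `z ∈ B_k` and every `n ≥ 0`: `f^n(z) ∈ B_{k+n}`, in particular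
`|f^n(z)| ≥ 4 R_{k+n}`; consequently the iterates tend to `∞` uniformly on `B_k`. -/
theorem stmt16 (c : ℂ) (N : ℕ) (hN : 10 ≤ N) :
    ∃ R₀ : ℝ, 0 < R₀ ∧
      ∀ R : ℝ, R₀ ≤ R → OneBound c N R →
        ∀ k : ℕ, 1 ≤ k →
          (∀ z ∈ Bset c N R k, ∀ n : ℕ,
            (flim c N R)^[n] z ∈ Bset c N R (k + n) ∧
            4 * Rseq c N R (k + n) ≤ ‖(flim c N R)^[n] z‖) ∧
          (∀ M : ℝ, ∃ n₀ : ℕ, ∀ n : ℕ, n₀ ≤ n →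
            ∀ z ∈ Bset c N R k, M ≤ ‖(flim c N R)^[n] z‖) := by
  refine ⟨1, one_pos, fun R hR hOB k hk ↦ ?_⟩
  have hN3 : 3 ≤ N := by omega
  have hB := mapsTo_iterate_flim_Bset hN3 hR hOB hk
  refine ⟨fun z hz n ↦ ⟨hB n hz, (hB n hz).1⟩, fun M ↦ ?_⟩
  obtain ⟨n₀, hn₀⟩ := eventually_atTop.mp
    ((tendsto_pow_atTop_atTop_of_one_lt (by norm_num : (1 : ℝ) < 16)).eventually_ge_atTop M)
  refine ⟨n₀, fun n hn z hz ↦ ?_⟩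
  have hRk := two_mul_le_Rseq hN3 hR hOB hk
  have hRkn := two_mul_le_Rseq hN3 hR hOB (by omega : 1 ≤ k + n)
  calc M ≤ 16 ^ n := hn₀ n hn
    _ ≤ 16 ^ n * Rseq c N R k := le_mul_of_one_le_right (by positivity) (by linarith)
    _ ≤ Rseq c N R (k + n) := sixteen_pow_mul_Rseq_le hN3 hR hOB hk n
    _ ≤ 4 * Rseq c N R (k + n) := by linarith
    _ ≤ ‖(flim c N R)^[n] z‖ := (hB n hz).1

end
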